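/- The space of idempotents of a unital Banach algebra is locally path-connected: any two idempotents at distance less than 1 are joined by a continuous path of idempotents. -/

import Mathlib

/-!
For idempotents `p`, `q` the element `u = qp + (1 - q)(1 - p)` satisfies `u p = q u`, so `q` is
the conjugate of `p` by `u` as soon as `u` is invertible. With `v = pq + (1 - p)(1 - q)`, one has
`(1 + t(u - 1))(1 + t(v - 1)) = 1 - (2t - t²)(p - q)²`, and the same in the other order. For
`t ∈ [0, 1]` we have `0 ≤ 2t - t² ≤ 1`, so when `‖p - q‖ < 1` the right side is invertible by the
Neumann series. Hence every point of the segment from `1` to `u` is a unit, and conjugating `p` along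
this segment gives a path of idempotents from `p` to `q`.
-/

open Set unitInterval

section Ring

variable {A : Type*} [Ring A] {p q : A}

def intertwiner (p q : A) : A := q * p + (1 - q) * (1 - p)

lemma intertwiner_mul (hp : IsIdempotentElem p) (hq : IsIdempotentElem q) :
    intertwiner p q * p = q * intertwiner p q := by
  simp only [intertwiner, add_mul, mul_add, sub_mul, mul_sub, one_mul, mul_one, mul_assoc, hp.eq]
  simp only [← mul_assoc, hq.eq]
  abel

lemma intertwiner_sub_one_mul (hp : IsIdempotentElem p) (hq : IsIdempotentElem q) :
    (intertwiner p q - 1) * (intertwiner q p - 1) = (p - q) ^ 2 := by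
  have hp_left (x : A) : p * (p * x) = p * x := by rw [← mul_assoc, hp.eq]
  simp only [intertwiner, sq, add_mul, mul_add, sub_mul, mul_sub, one_mul, mul_one, mul_assoc,
    hp.eq, hq.eq, hp_left]
  abel

lemma intertwiner_sub_one_add (hp : IsIdempotentElem p) (hq : IsIdempotentElem q) :
    (intertwiner p q - 1) + (intertwiner q p - 1) = (-2 : ℤ) • (p - q) ^ 2 := by
  simp only [intertwiner, sq, sub_mul, mul_sub, hp.eq, hq.eq]
  noncomm_ring

lemma one_add_smul_intertwiner_mul {R : Type*} [CommRing R] [Algebra R A]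
    (hp : IsIdempotentElem p) (hq : IsIdempotentElem q) (c : R) :
    (1 + c • (intertwiner p q - 1)) * (1 + c • (intertwiner q p - 1)) =
      1 - (2 * c - c ^ 2) • (p - q) ^ 2 :=
  calc _ = 1 + c • ((intertwiner p q - 1) + (intertwiner q p - 1))
        + c ^ 2 • ((intertwiner p q - 1) * (intertwiner q p - 1)) := by
          simp only [add_mul, mul_add, one_mul, mul_one, smul_mul_assoc, mul_smul_comm, smul_smul,
            smul_add, sq]
          abel
    _ = _ := by rw [intertwiner_sub_one_mul hp hq, intertwiner_sub_one_add hp hq]; module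

lemma IsIdempotentElem.mul_mul_ringInverse {u : A} (hp : IsIdempotentElem p) (hu : IsUnit u) :
    IsIdempotentElem (u * p * Ring.inverse u) :=
  calc u * p * Ring.inverse u * (u * p * Ring.inverse u)
      = u * p * (Ring.inverse u * u) * p * Ring.inverse u := by noncomm_ring
    _ = u * p * Ring.inverse u := by
      rw [Ring.inverse_mul_cancel u hu, mul_one, mul_assoc u, hp.eq]

end Ring

lemma isUnit_one_add_smul_intertwiner {A : Type*} [NormedRing A] [NormedAlgebra ℝ A]
    [CompleteSpace A] {p q : A} (hp : IsIdempotentElem p) (hq : IsIdempotentElem q)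
    (hpq : ‖p - q‖ < 1) {t : ℝ} (ht : t ∈ I) :
    IsUnit (1 + t • (intertwiner p q - 1)) := by
  have hcoeff : ‖2 * t - t ^ 2‖ ≤ 1 := by
    rw [Real.norm_eq_abs, abs_le]
    constructor <;> nlinarith [ht.1, ht.2]
  have hsmall : ‖(2 * t - t ^ 2) • (p - q) ^ 2‖ < 1 :=
    calc ‖(2 * t - t ^ 2) • (p - q) ^ 2‖ ≤ 1 * ‖p - q‖ ^ 2 := by
          rw [norm_smul]
          gcongr
          exact norm_pow_le' _ two_pos
      _ < 1 := by nlinarith [norm_nonneg (p - q)]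
  have hcomm : Commute (1 + t • (intertwiner p q - 1)) (1 + t • (intertwiner q p - 1)) := by
    rw [Commute, SemiconjBy, one_add_smul_intertwiner_mul hp hq,
      one_add_smul_intertwiner_mul hq hp, ← neg_sub p q, neg_sq]
  have hprod := isUnit_one_sub_of_norm_lt_one hsmall
  rw [← one_add_smul_intertwiner_mul hp hq] at hprod
  exact (hcomm.isUnit_mul_iff.mp hprod).1

lemma IsIdempotentElem.joinedIn_of_path_of_isUnit {A : Type*} [NormedRing A]
    [HasSummableGeomSeries A] {p q : A} (hp : IsIdempotentElem p) {a : ℝ → A}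
    (ha : Continuous a) (ha_unit : ∀ t ∈ I, IsUnit (a t)) (ha₀ : a 0 = 1)
    (ha₁ : a 1 * p = q * a 1) :
    JoinedIn {r : A | IsIdempotentElem r} p q := by
  have hinv : ContinuousOn (fun t ↦ Ring.inverse (a t)) I := fun t ht ↦ by
    obtain ⟨u, hu⟩ := ha_unit t ht
    exact ((hu ▸ NormedRing.inverse_continuousAt u).comp ha.continuousAt).continuousWithinAt
  refine JoinedIn.ofLine (f := fun t ↦ a t * p * Ring.inverse (a t))
    ((ha.continuousOn.mul continuousOn_const).mul hinv) ?_ ?_ ?_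
  · simp [ha₀]
  · rw [ha₁, mul_assoc, Ring.mul_inverse_cancel _ (ha_unit 1 ⟨zero_le_one, le_rfl⟩), mul_one]
  · rintro _ ⟨t, ht, rfl⟩
    exact hp.mul_mul_ringInverse (ha_unit t ht)

theorem joinedIn_idempotents_of_dist_lt_one
    {A : Type*} [NormedRing A] [NormedAlgebra ℂ A] [CompleteSpace A]
    (p q : A) (hp : p * p = p) (hq : q * q = q) (hpq : ‖p - q‖ < 1) :
    JoinedIn {r : A | r * r = r} p q :=
  IsIdempotentElem.joinedIn_of_path_of_isUnit (a := fun t : ℝ ↦ 1 + t • (intertwiner p q - 1))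
    hp (by fun_prop) (fun _ ht ↦ isUnit_one_add_smul_intertwiner hp hq hpq ht) (by simp)
    (by simpa using intertwiner_mul hp hq)
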